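/- Let $p^*$ minimize $p(-1)$ among all polynomials of degree at most $n \ge 1$ satisfying the equioscillation property of modulus 1 on $[0,a]$, with optimal nodes $0 \le t_0^* < \cdots < t_n^* \le a$. Then $t_0^* = 0$ and $t_n^* = a$. -/

import Mathlib

/-!
If `t 0 > 0` or `t n < a`, the nodes fit into `[0, a]` with room to spare, so for every `u`
near `-1` the polynomial `x ↦ p((t 0 - u) x + t 0)` is an admissible competitor whose value
at `-1` is `p(u)`. Hence `-1` is a local minimum of `p` and `p'(-1) = 0`. On the other hand `p`
has `n` zeros interlacing the nodes, so by Rolle `p'` has `n - 1` more zeros in `(t 0, t n)`,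
to the right of `-1`: `n` zeros of a polynomial of degree `< n`, so `p` is constant, which
the alternating values forbid.
-/

open Polynomial

/-- A polynomial equioscillates with modulus 1 on `[0,a]` with `n+1` nodes. -/
def Equioscillates (n : ℕ) (a : ℝ) (p : ℝ[X]) : Prop :=
  ∃ t : Fin (n + 1) → ℝ, StrictMono t ∧ 0 ≤ t 0 ∧ t (Fin.last n) ≤ a ∧
    ∀ i : Fin (n + 1), p.eval (t i) = (-1 : ℝ) ^ (i : ℕ)

open Set

section Interlacing

variable {α : Type*}

theorem strictMono_of_forall_mem_Ioo [Preorder α] {m : ℕ} {s : Fin (m + 1) → α}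
    (hs : Monotone s) {r : Fin m → α} (hr : ∀ i, r i ∈ Ioo (s i.castSucc) (s i.succ)) :
    StrictMono r := fun i j hij =>
  calc r i < s i.succ := (hr i).2
    _ ≤ s j.castSucc := hs (Fin.succ_le_castSucc_iff.2 hij)
    _ < r j := (hr j).1

variable [ConditionallyCompleteLinearOrder α] [TopologicalSpace α] [OrderTopology α]
  [DenselyOrdered α]

theorem exists_mem_Ioo_eq_zero_of_mul_neg {f : α → ℝ} {a b : α} (hab : a ≤ b)
    (hf : ContinuousOn f (Icc a b)) (h : f a * f b < 0) : ∃ c ∈ Ioo a b, f c = 0 := by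
  rcases mul_neg_iff.1 h with ⟨ha, hb⟩ | ⟨ha, hb⟩
  · exact intermediate_value_Ioo' hab hf ⟨hb, ha⟩
  · exact intermediate_value_Ioo hab hf ⟨ha, hb⟩

theorem exists_zeros_of_sign_changes {f : α → ℝ} (hf : Continuous f) {m : ℕ}
    {t : Fin (m + 1) → α} (ht : Monotone t)
    (h : ∀ i : Fin m, f (t i.castSucc) * f (t i.succ) < 0) :
    ∃ z : Fin m → α, ∀ i, z i ∈ Ioo (t i.castSucc) (t i.succ) ∧ f (z i) = 0 := by
  choose z hz using fun i =>
    exists_mem_Ioo_eq_zero_of_mul_neg (ht (Fin.castSucc_le_succ i)) hf.continuousOn (h i)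
  exact ⟨z, hz⟩

end Interlacing

theorem exists_deriv_zeros_of_zeros {f : ℝ → ℝ} (hf : Continuous f) {m : ℕ}
    {z : Fin (m + 1) → ℝ} (hz : StrictMono z) (h : ∀ i, f (z i) = 0) :
    ∃ w : Fin m → ℝ, ∀ i, w i ∈ Ioo (z i.castSucc) (z i.succ) ∧ deriv f (w i) = 0 := by
  choose w hw using fun i : Fin m =>
    exists_deriv_eq_zero (hz (Fin.castSucc_lt_succ (i := i))) hf.continuousOn
      ((h _).trans (h _).symm)
  exact ⟨w, hw⟩

namespace Polynomial

theorem exists_derivative_zeros_of_alternating (p : ℝ[X]) {m : ℕ} {t : Fin (m + 2) → ℝ}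
    (ht : StrictMono t) (hp : ∀ i, p.eval (t i) = (-1 : ℝ) ^ (i : ℕ)) :
    ∃ w : Fin m → ℝ, StrictMono w ∧ ∀ i, t 0 < w i ∧ p.derivative.eval (w i) = 0 := by
  obtain ⟨z, hz⟩ := exists_zeros_of_sign_changes p.continuous ht.monotone fun i => by
    simp [hp, pow_succ]
  have hz_mono : StrictMono z := strictMono_of_forall_mem_Ioo ht.monotone fun i => (hz i).1
  obtain ⟨w, hw⟩ := exists_deriv_zeros_of_zeros p.continuous hz_mono fun i => (hz i).2
  refine ⟨w, strictMono_of_forall_mem_Ioo hz_mono.monotone fun i => (hw i).1,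
    fun i => ⟨?_, by simpa using (hw i).2⟩⟩
  calc t 0 ≤ t i.castSucc.castSucc := ht.monotone (Fin.zero_le _)
    _ < z i.castSucc := (hz _).1.1
    _ < w i := (hw i).1.1

end Polynomial

theorem equioscillates_comp_affine {n : ℕ} {a α β : ℝ} {p : ℝ[X]} {t : Fin (n + 1) → ℝ}
    (hα : 0 < α) (ht : StrictMono t) (h0 : β ≤ t 0) (hlast : t (Fin.last n) ≤ β + α * a)
    (hp : ∀ i, p.eval (t i) = (-1 : ℝ) ^ (i : ℕ)) :
    Equioscillates n a (p.comp (C α * X + C β)) := by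
  refine ⟨fun i => (t i - β) / α, fun i j hij => ?_, ?_, ?_, fun i => ?_⟩
  · exact div_lt_div_of_pos_right (sub_lt_sub_right (ht hij) β) hα
  · exact div_nonneg (sub_nonneg.2 h0) hα.le
  · rw [div_le_iff₀ hα]
    linarith
  · rw [eval_comp]
    simpa [mul_div_cancel₀ _ hα.ne'] using hp i

section Minimizer

variable {n : ℕ} {a : ℝ} {p : ℝ[X]} {t : Fin (n + 1) → ℝ}

theorem eval_neg_one_le_eval (hd : p.natDegree ≤ n) (ht : StrictMono t)
    (hp : ∀ i, p.eval (t i) = (-1 : ℝ) ^ (i : ℕ))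
    (hmin : ∀ q : ℝ[X], q.natDegree ≤ n → Equioscillates n a q → p.eval (-1) ≤ q.eval (-1))
    {u : ℝ} (hu : u < t 0) (hua : t (Fin.last n) ≤ t 0 + (t 0 - u) * a) :
    p.eval (-1) ≤ p.eval u := by
  have hα : 0 < t 0 - u := sub_pos.2 hu
  have hq := hmin _ (by rw [natDegree_comp, natDegree_linear hα.ne', mul_one]; exact hd)
    (equioscillates_comp_affine hα ht le_rfl (by linarith) hp)
  simpa using hq

theorem derivative_eval_neg_one_eq_zero (hd : p.natDegree ≤ n) (ht : StrictMono t)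
    (hp : ∀ i, p.eval (t i) = (-1 : ℝ) ^ (i : ℕ))
    (hmin : ∀ q : ℝ[X], q.natDegree ≤ n → Equioscillates n a q → p.eval (-1) ≤ q.eval (-1))
    (ht0 : 0 ≤ t 0) (hta : t (Fin.last n) ≤ a) (hgap : 0 < t 0 ∨ t (Fin.last n) < a) :
    p.derivative.eval (-1) = 0 := by
  have hlt : t (Fin.last n) < t 0 + (t 0 + 1) * a := by
    have := ht.monotone (Fin.zero_le (Fin.last n))
    rcases hgap with h | h <;> nlinarith
  have hloc : IsLocalMin (fun x => p.eval x) (-1) := by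
    have hcont : Continuous fun u : ℝ => t 0 + (t 0 - u) * a := by fun_prop
    filter_upwards [eventually_lt_nhds (show (-1 : ℝ) < t 0 by linarith),
      (continuous_const.tendsto _).eventually_lt (hcont.tendsto _) (by simpa using hlt)]
      with u hu hua
    exact eval_neg_one_le_eval hd ht hp hmin hu hua.le
  simpa using hloc.deriv_eq_zero

end Minimizer

/-- the optimal equioscillating polynomial has `t 0 = 0` and `t n = a`. -/
theorem stmt_14 (n : ℕ) (hn : 1 ≤ n) (a : ℝ) (p : ℝ[X]) (hd : p.natDegree ≤ n)
    (t : Fin (n + 1) → ℝ) (ht0 : 0 ≤ t 0) (htmono : StrictMono t) (hta : t (Fin.last n) ≤ a)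
    (hp : ∀ i : Fin (n + 1), p.eval (t i) = (-1 : ℝ) ^ (i : ℕ))
    (hmin : ∀ q : ℝ[X], q.natDegree ≤ n → Equioscillates n a q →
      p.eval (-1) ≤ q.eval (-1)) :
    t 0 = 0 ∧ t (Fin.last n) = a := by
  by_contra hcon
  have hgap : 0 < t 0 ∨ t (Fin.last n) < a := by
    contrapose! hcon
    exact ⟨le_antisymm hcon.1 ht0, le_antisymm hta hcon.2⟩
  have hcrit := derivative_eval_neg_one_eq_zero hd htmono hp hmin ht0 hta hgap
  obtain ⟨m, rfl⟩ : ∃ m, n = m + 1 := ⟨n - 1, by omega⟩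
  obtain ⟨w, hw_mono, hw⟩ := p.exists_derivative_zeros_of_alternating htmono hp
  have hderiv : p.derivative = 0 := by
    refine eq_zero_of_natDegree_lt_card_of_eval_eq_zero _ (f := Fin.cons (-1) w)
      (Fin.cons_injective_iff.2 ⟨?_, hw_mono.injective⟩) (Fin.cases hcrit fun i => (hw i).2) ?_
    · rintro ⟨i, hi⟩
      linarith [(hw i).1]
    · have := natDegree_derivative_le p
      simp only [Fintype.card_fin]
      omega
  have hconst : p.eval (t 0) = p.eval (t 1) := by
    rw [eq_C_of_derivative_eq_zero hderiv, eval_C, eval_C]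
  rw [hp, hp] at hconst
  norm_num at hconst
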